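/- arXiv:2406.03471 — 3 statements merged into one kernel-verified Lean document; each statement's English description precedes it below -/
import Mathlib

section
/- The poset ℙ₁ is countably closed: for every sequence f₀, f₁, f₂, … of elements of ℙ₁ such that f_{k+1} ⊇* f_k for every k (i.e. f_k ∖ f_{k+1} is finite), there exists f ∈ ℙ₁ such that f ⊇* f_k for every k. -/
/-- A partial function from ℕ to {0,1} is represented as `f : ℕ → Option Bool`,
with `dom f = {n | f n ≠ none}` and value `1` represented by `true`.
`memP1 f` says `f ∈ ℙ₁`: `limsup_{n→∞} |[2^n, 2^{n+1}) ∖ dom f| = ∞`, i.e.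
for every `m` there are infinitely many `n` with `|[2^n,2^{n+1}) ∖ dom f| ≥ m`. -/
def memP1 (f : ℕ → Option Bool) : Prop :=
  ∀ m N : ℕ, ∃ n ≥ N, m ≤ ((Finset.Ico (2 ^ n) (2 ^ (n + 1))).filter
    (fun i => f i = none)).card

/-!
Past some point each `F (k+1)` agrees with `F k` on `dom (F k)`, hence past some point `F j`
agrees with every `F k`, `k ≤ j`. Pick dyadic blocks `φ 0 < φ 1 < ⋯` such that block `φ k` has
at least `k` holes in `F k` and lies beyond the point where `F k` agrees with all earlier `F i`.
Gluing the `F k` along the cut points `2 ^ φ k` gives `f`: on block `φ k` it is `F k`, so it has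
`k` holes there, and from `2 ^ φ k` on it is some `F j` with `j ≥ k`, which agrees with `F k`.
-/

open Filter

section AlmostExtends

variable {α β : Type*}

/-- `AlmostExtends g f` is `g ⊇* f`. -/
def AlmostExtends (g f : α → Option β) : Prop :=
  {a | f a ≠ none ∧ g a ≠ f a}.Finite

theorem almostExtends_iff_eventually {g f : α → Option β} :
    AlmostExtends g f ↔ ∀ᶠ a in cofinite, f a ≠ none → g a = f a := by
  simp only [AlmostExtends, eventually_cofinite, Classical.not_imp]

theorem AlmostExtends.refl (f : α → Option β) : AlmostExtends f f := by
  simp [AlmostExtends]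

theorem AlmostExtends.trans {f g h : α → Option β} (hgf : AlmostExtends g f)
    (hhg : AlmostExtends h g) : AlmostExtends h f := by
  rw [almostExtends_iff_eventually] at *
  filter_upwards [hgf, hhg] with a hgf hhg hf
  rw [hhg (hgf hf ▸ hf), hgf hf]

theorem almostExtends_of_le {F : ℕ → α → Option β}
    (hF : ∀ k, AlmostExtends (F (k + 1)) (F k)) {k j : ℕ} (hkj : k ≤ j) :
    AlmostExtends (F j) (F k) := by
  induction j, hkj using Nat.le_induction with
  | base => exact .refl _
  | succ j _ ih => exact ih.trans (hF j)

theorem eventually_agree_of_chain {F : ℕ → ℕ → Option β}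
    (hF : ∀ k, AlmostExtends (F (k + 1)) (F k)) (j : ℕ) :
    ∀ᶠ n in atTop, ∀ k ≤ j, F k n ≠ none → F j n = F k n := by
  rw [← Nat.cofinite_eq_atTop]
  exact (eventually_all_finite (Set.finite_le_nat j)).2 fun k hk =>
    almostExtends_iff_eventually.1 (almostExtends_of_le hF hk)

end AlmostExtends

section Glue

variable {β : Type*} {b : ℕ → ℕ}

/-- The index `k` of the interval `[b k, b (k+1))` containing `n`; it is `0` for `n < b 0`. -/
def blockIndex (b : ℕ → ℕ) (n : ℕ) : ℕ :=
  Nat.findGreatest (fun k => b k ≤ n) n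

theorem le_blockIndex (hb : StrictMono b) {k n : ℕ} (h : b k ≤ n) : k ≤ blockIndex b n :=
  Nat.le_findGreatest ((hb.id_le k).trans h) h

theorem apply_blockIndex_le (hb : StrictMono b) {k n : ℕ} (h : b k ≤ n) :
    b (blockIndex b n) ≤ n :=
  Nat.findGreatest_spec (P := fun k => b k ≤ n) ((hb.id_le k).trans h) h

theorem blockIndex_eq (hb : StrictMono b) {k n : ℕ} (h₁ : b k ≤ n) (h₂ : n < b (k + 1)) :
    blockIndex b n = k := by
  refine le_antisymm ?_ (le_blockIndex hb h₁)
  by_contra! hlt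
  exact h₂.not_ge ((hb.monotone hlt).trans (apply_blockIndex_le hb h₁))

def glue (F : ℕ → ℕ → Option β) (b : ℕ → ℕ) (n : ℕ) : Option β :=
  F (blockIndex b n) n

theorem almostExtends_glue {F : ℕ → ℕ → Option β} (hb : StrictMono b)
    (hagree : ∀ j, ∀ n ≥ b j, ∀ k ≤ j, F k n ≠ none → F j n = F k n) (k : ℕ) :
    AlmostExtends (glue F b) (F k) := by
  refine (Set.finite_Iio (b k)).subset fun n ⟨hk, hne⟩ => ?_
  by_contra hn
  rw [Set.mem_Iio, not_lt] at hn
  exact hne (hagree _ n (apply_blockIndex_le hb hn) k (le_blockIndex hb hn) hk)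

end Glue

def blockHoles (f : ℕ → Option Bool) (n : ℕ) : ℕ :=
  ((Finset.Ico (2 ^ n) (2 ^ (n + 1))).filter (fun i => f i = none)).card

theorem memP1.frequently {f : ℕ → Option Bool} (hf : memP1 f) (m : ℕ) :
    ∃ᶠ n in atTop, m ≤ blockHoles f n :=
  frequently_atTop.2 (hf m)

theorem blockHoles_congr {f g : ℕ → Option Bool} {n : ℕ}
    (h : ∀ i ∈ Finset.Ico (2 ^ n) (2 ^ (n + 1)), f i = g i) :
    blockHoles f n = blockHoles g n := by
  unfold blockHoles
  rw [Finset.filter_congr fun i hi => by rw [h i hi]]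

theorem memP1_glue {F : ℕ → ℕ → Option Bool} {φ : ℕ → ℕ} (hφ : StrictMono φ)
    (hholes : ∀ k, k ≤ blockHoles (F k) (φ k)) : memP1 (glue F (2 ^ φ ·)) := by
  have hb : StrictMono (2 ^ φ ·) := (pow_right_strictMono₀ one_lt_two).comp hφ
  intro m N
  set k := max m N
  refine ⟨φ k, (le_max_right m N).trans (hφ.id_le k), ?_⟩
  have hblock : ∀ i ∈ Finset.Ico (2 ^ φ k) (2 ^ (φ k + 1)), glue F (2 ^ φ ·) i = F k i := by
    intro i hi
    rw [Finset.mem_Ico] at hi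
    have hnext : 2 ^ (φ k + 1) ≤ 2 ^ φ (k + 1) :=
      Nat.pow_le_pow_right two_pos (hφ (Nat.lt_succ_self k))
    rw [glue, blockIndex_eq hb hi.1 (hi.2.trans_le hnext)]
  change m ≤ blockHoles _ (φ k)
  rw [blockHoles_congr hblock]
  exact (le_max_left m N).trans (hholes k)

/-- The poset ℙ₁ is countably closed: for every sequence `F 0, F 1, F 2, …` of elements
of ℙ₁ such that `F (k+1) ⊇* F k` for every `k` (i.e. `F k ∖ F (k+1)`, the set of points
where `F k` is defined but `F (k+1)` does not agree with it, is finite), there is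
`f ∈ ℙ₁` with `f ⊇* F k` for every `k`. -/
theorem P1_countably_closed (F : ℕ → ℕ → Option Bool)
    (hF : ∀ k, memP1 (F k))
    (hchain : ∀ k, {n : ℕ | F k n ≠ none ∧ F (k + 1) n ≠ F k n}.Finite) :
    ∃ f : ℕ → Option Bool, memP1 f ∧
      ∀ k, {n : ℕ | F k n ≠ none ∧ f n ≠ F k n}.Finite := by
  obtain ⟨φ, hφ, hφF⟩ := extraction_forall_of_frequently fun k =>
    ((hF k).frequently k).and_eventually
      (eventually_forall_ge_atTop.2 (eventually_agree_of_chain hchain k))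
  have hb : StrictMono (2 ^ φ ·) := (pow_right_strictMono₀ one_lt_two).comp hφ
  refine ⟨glue F (2 ^ φ ·), memP1_glue hφ fun k => (hφF k).1, almostExtends_glue hb ?_⟩
  intro j n hn
  exact (hφF j).2 n (Nat.lt_two_pow_self.le.trans hn)
end

section
/- Standard conditions are dense in ℙ₀: for every q ∈ ℙ₀ there exists p ∈ ℙ₀ with p ⊇ q such that for every ℓ > 0 the set of n with 1 ≤ |[2^n,2^{n+1}) ∖ dom(p)| ≤ ℓ is finite (equivalently, the sizes |[2^n,2^{n+1}) ∖ dom(p)| over those n for which this set is nonempty diverge to infinity). -/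
/-- `memP0 f` says `f ∈ ℙ₀`: `f ∈ ℙ₁`, for every `n` the set `f⁻¹(1) ∩ [2^n,2^{n+1})`
has at most one element, and it is nonempty if and only if `[2^n,2^{n+1}) ⊆ dom f`. -/
def memP0 (f : ℕ → Option Bool) : Prop :=
  memP1 f ∧
  (∀ n : ℕ, ({i | f i = some true} ∩ Set.Ico (2 ^ n) (2 ^ (n + 1))).Subsingleton) ∧
  (∀ n : ℕ, ({i | f i = some true} ∩ Set.Ico (2 ^ n) (2 ^ (n + 1))).Nonempty ↔
    ∀ i ∈ Set.Ico (2 ^ n) (2 ^ (n + 1)), f i ≠ none)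

/-!
Since `q ∈ ℙ₁`, there are blocks `n₀ < n₁ < ⋯` such that `q` has at least `k` holes in block `nₖ`.
Keep `q` on these blocks and fill every other block completely: a block of `q ∈ ℙ₀` with a hole
contains no `1`, so putting `1` at its first hole and `0` at the others keeps the `ℙ₀` conditions.
Every block of the extension is then either full or one of the `nₖ`, and the blocks with between
`1` and `ℓ` holes are among `n₀, …, n_ℓ`.
-/

open Set

def holes (f : ℕ → Option Bool) (n : ℕ) : Finset ℕ :=
  {i ∈ Finset.Ico (2 ^ n) (2 ^ (n + 1)) | f i = none}

def ones (f : ℕ → Option Bool) (n : ℕ) : Set ℕ :=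
  {i | f i = some true} ∩ Ico (2 ^ n) (2 ^ (n + 1))

theorem holes_eq_empty_iff {f : ℕ → Option Bool} {n : ℕ} :
    holes f n = ∅ ↔ ∀ i ∈ Ico (2 ^ n) (2 ^ (n + 1)), f i ≠ none := by
  simp [holes, Finset.filter_eq_empty_iff]

theorem holes_congr {f g : ℕ → Option Bool} {n : ℕ} (h : EqOn f g (Ico (2 ^ n) (2 ^ (n + 1)))) :
    holes f n = holes g n :=
  Finset.filter_congr fun i hi => by rw [h (Finset.mem_Ico.1 hi)]

theorem ones_congr {f g : ℕ → Option Bool} {n : ℕ} (h : EqOn f g (Ico (2 ^ n) (2 ^ (n + 1)))) :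
    ones f n = ones g n := by
  ext i
  simp only [ones, mem_inter_iff, mem_ofPred_eq]
  exact ⟨fun ⟨hf, hi⟩ => ⟨h hi ▸ hf, hi⟩, fun ⟨hg, hi⟩ => ⟨(h hi).symm ▸ hg, hi⟩⟩

theorem memP1_iff_exists_strictMono {f : ℕ → Option Bool} :
    memP1 f ↔ ∃ s : ℕ → ℕ, StrictMono s ∧ ∀ k, k ≤ (holes f (s k)).card := by
  constructor
  · exact fun h => Filter.extraction_forall_of_frequently fun m => Filter.frequently_atTop.2 (h m)
  · rintro ⟨s, hs, hk⟩ m N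
    exact ⟨s (max m N), (le_max_right m N).trans (hs.id_le _), (le_max_left m N).trans (hk _)⟩

theorem finite_setOf_card_holes_le {f : ℕ → Option Bool} {s : ℕ → ℕ}
    (hfull : ∀ n ∉ range s, holes f n = ∅) (hk : ∀ k, k ≤ (holes f (s k)).card) (ℓ : ℕ) :
    {n | 1 ≤ (holes f n).card ∧ (holes f n).card ≤ ℓ}.Finite := by
  refine ((finite_Iic ℓ).image s).subset fun n ⟨hpos, hle⟩ => ?_
  by_cases hn : n ∈ range s
  · obtain ⟨k, rfl⟩ := hn
    exact ⟨k, (hk k).trans hle, rfl⟩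
  · simp [hfull n hn] at hpos

open Classical in
noncomputable def fillOutside (q : ℕ → Option Bool) (K : Set ℕ) (i : ℕ) : Option Bool :=
  if q i = none ∧ Nat.log 2 i ∉ K then some (decide (i = sInf (holes q (Nat.log 2 i) : Set ℕ)))
  else q i

namespace fillOutside

variable {q : ℕ → Option Bool} {K : Set ℕ} {n : ℕ}

open Classical in
theorem apply_of_mem_Ico {i : ℕ} (hi : i ∈ Ico (2 ^ n) (2 ^ (n + 1))) :
    fillOutside q K i =
      if q i = none ∧ n ∉ K then some (decide (i = sInf (holes q n : Set ℕ))) else q i := by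
  rw [fillOutside, Nat.log_eq_of_pow_le_of_lt_pow hi.1 hi.2]

theorem apply_of_ne_none {i : ℕ} (hi : q i ≠ none) : fillOutside q K i = q i := by
  simp [fillOutside, hi]

theorem eqOn_of_mem_or_holes_eq_empty (h : n ∈ K ∨ holes q n = ∅) :
    EqOn (fillOutside q K) q (Ico (2 ^ n) (2 ^ (n + 1))) := by
  intro i hi
  rw [apply_of_mem_Ico hi, if_neg]
  rintro ⟨hqi, hn⟩
  exact holes_eq_empty_iff.1 (h.resolve_left hn) i hi hqi

theorem holes_eq_empty (hn : n ∉ K) : holes (fillOutside q K) n = ∅ := by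
  refine holes_eq_empty_iff.2 fun i hi => ?_
  rw [apply_of_mem_Ico hi]
  split_ifs with h
  · simp
  · exact fun hqi => h ⟨hqi, hn⟩

theorem ones_eq_singleton (hn : n ∉ K) (hholes : (holes q n).Nonempty) (hones : ones q n = ∅) :
    ones (fillOutside q K) n = {sInf (holes q n : Set ℕ)} := by
  set first := sInf (holes q n : Set ℕ)
  have hfirst : first ∈ holes q n := Nat.sInf_mem (by exact_mod_cast hholes)
  simp only [holes, Finset.mem_filter, Finset.mem_Ico] at hfirst
  ext i
  simp only [ones, mem_inter_iff, mem_ofPred_eq, mem_singleton_iff]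
  constructor
  · rintro ⟨hpi, hi⟩
    rw [apply_of_mem_Ico hi] at hpi
    by_cases hqi : q i = none
    · simpa [hqi, hn] using hpi
    · rw [if_neg fun h => hqi h.1] at hpi
      exact absurd (hones ▸ ⟨hpi, hi⟩ : i ∈ (∅ : Set ℕ)) (notMem_empty i)
  · rintro rfl
    refine ⟨?_, hfirst.1⟩
    rw [apply_of_mem_Ico hfirst.1, if_pos ⟨hfirst.2, hn⟩, decide_eq_true rfl]

theorem ones_subsingleton_and_nonempty_iff (hsub : (ones q n).Subsingleton)
    (hiff : (ones q n).Nonempty ↔ holes q n = ∅) :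
    (ones (fillOutside q K) n).Subsingleton ∧
      ((ones (fillOutside q K) n).Nonempty ↔ holes (fillOutside q K) n = ∅) := by
  by_cases h : n ∈ K ∨ holes q n = ∅
  · have heq := eqOn_of_mem_or_holes_eq_empty h
    rw [ones_congr heq, holes_congr heq]
    exact ⟨hsub, hiff⟩
  · push Not at h
    have hones : ones q n = ∅ :=
      not_nonempty_iff_eq_empty.1 fun hne => h.2.ne_empty (hiff.1 hne)
    rw [ones_eq_singleton h.1 h.2 hones, holes_eq_empty h.1]
    simp

end fillOutside

/-- Standard conditions are dense in ℙ₀: for every `q ∈ ℙ₀` there is `p ∈ ℙ₀` with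
`p ⊇ q` such that for every `ℓ > 0` the set of `n` with
`1 ≤ |[2^n,2^{n+1}) ∖ dom p| ≤ ℓ` is finite. -/
theorem standard_conditions_dense (q : ℕ → Option Bool) (hq : memP0 q) :
    ∃ p : ℕ → Option Bool, memP0 p ∧ (∀ n b, q n = some b → p n = some b) ∧
      ∀ ℓ : ℕ, 0 < ℓ →
        {n : ℕ | 1 ≤ ((Finset.Ico (2 ^ n) (2 ^ (n + 1))).filter
            (fun i => p i = none)).card ∧
          ((Finset.Ico (2 ^ n) (2 ^ (n + 1))).filter
            (fun i => p i = none)).card ≤ ℓ}.Finite := by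
  obtain ⟨hP1, hsub, hiff⟩ := hq
  obtain ⟨s, hs, hholes_q⟩ := memP1_iff_exists_strictMono.1 hP1
  set p := fillOutside q (range s)
  have hholes_p : ∀ k, k ≤ (holes p (s k)).card := fun k => by
    rw [holes_congr (fillOutside.eqOn_of_mem_or_holes_eq_empty (.inl (mem_range_self k)))]
    exact hholes_q k
  have hblock n := fillOutside.ones_subsingleton_and_nonempty_iff (K := range s) (hsub n)
    ((hiff n).trans holes_eq_empty_iff.symm)
  refine ⟨p, ⟨memP1_iff_exists_strictMono.2 ⟨s, hs, hholes_p⟩, fun n => (hblock n).1,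
    fun n => (hblock n).2.trans holes_eq_empty_iff⟩, ?_, ?_⟩
  · exact fun i b hqi => (fillOutside.apply_of_ne_none (by simp [hqi])).trans hqi
  · exact fun ℓ _ => finite_setOf_card_holes_le (fun n => fillOutside.holes_eq_empty) hholes_p ℓ
end

section
/- For every natural number ℓ there exists an ℓ-structure; that is, there exists a family {a_x : x ∈ 𝒩_ℓ} of two-element subsets of ℕ such that, setting Y_ρ = ⋃{a_x : x ∈ 𝒩_ℓ and x_j = ρ_j for all j in the domain of ρ} for each partial index ρ defined on a final segment {i, i+1, …, ℓ} of {0,…,ℓ} (with Y_∅ denoting the union of all the pairs a_x), the following hold for every i ≤ ℓ and every partial index ρ defined on {i+1,…,ℓ} (for i = ℓ, ρ is empty): (a) the sets Y_{ρ⌢m} for m < L_i are pairwise disjoint, where ρ⌢m denotes ρ extended by assigning value m at coordinate i; (b) Y_ρ = ⋃_{m < L_i} Y_{ρ⌢m}, so in particular every Y_{ρ⌢k} with k < n_i is contained in this union; (c) for every Y ⊆ Y_ρ, if Y ∩ Y_{ρ⌢m} ≠ ∅ for every m < L_i, then there exists k < n_i with Y_{ρ⌢k} ⊆ Y. Moreover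 one can arrange that Y_∅ is an initial segment of ℕ of cardinality at most L_{ℓ+1}. -/
/-- The sequence `L`: `L 0 = 2` and `L (j+1) = 2·n 0·n 1⋯n j` where
`n j = L j + (L j)^(L j)`; equivalently `L (j+1) = L j * n j`. -/
def Lseq : ℕ → ℕ
  | 0 => 2
  | j + 1 => Lseq j * (Lseq j + Lseq j ^ Lseq j)

/-- `n j = L j + (L j)^(L j)`. -/
def nseq (j : ℕ) : ℕ := Lseq j + Lseq j ^ Lseq j

/-- Given a family of pairs `a x` indexed by sequences `x = (x 0, …, x ℓ)` with
`x j < n j`, the set `Yset ℓ a i ρ` is the union of all pairs `a x` over those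
indices `x` agreeing with `ρ` on all coordinates `j` with `i ≤ j ≤ ℓ`. -/
def Yset (ℓ : ℕ) (a : (Fin (ℓ + 1) → ℕ) → Finset ℕ) (i : ℕ)
    (ρ : Fin (ℓ + 1) → ℕ) : Set ℕ :=
  ⋃ x ∈ {x : Fin (ℓ + 1) → ℕ | (∀ j, x j < nseq (j : ℕ)) ∧
    ∀ j : Fin (ℓ + 1), i ≤ (j : ℕ) → x j = ρ j}, ((a x : Finset ℕ) : Set ℕ)


/-!
Structures are built by induction on the number `L` of coordinates, keeping the ground set
`Y_∅ = [0, S)` with `S ≤ L_L`. A new top coordinate with value `k < n_L` places a copy of the old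
structure into `[0, L_L·S)` by an injective map: for `k < L_L` onto the block `[kS, kS + S)`, and
for `L_L ≤ k` onto a transversal that meets each of the first `S` blocks once. Injective images
preserve conditions (a)–(c) at the old levels. At the new level the blocks are the sets
`Y_{ρ⌢m}`, `m < L_L`, and a set meeting every block contains some transversal; since
`S ^ S ≤ L_L ^ L_L = n_L - L_L`, every transversal is realised by some value `k < n_L`.
-/

open Set

/-- Conditions (a)–(c) at one level, with `Z = Y_ρ` and `Y m = Y_{ρ⌢m}`. -/
def IsSplitting {α : Type*} (Z : Set α) (Y : ℕ → Set α) (L n : ℕ) : Prop :=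
  (∀ m m' : ℕ, m < L → m' < L → m ≠ m' → Disjoint (Y m) (Y m')) ∧
  Z = ⋃ m ∈ Iio L, Y m ∧
  ∀ W : Set α, W ⊆ Z → (∀ m < L, (W ∩ Y m).Nonempty) → ∃ k < n, Y k ⊆ W

namespace IsSplitting

variable {α β : Type*} {Z : Set α} {Y : ℕ → Set α} {L n : ℕ}

theorem image (h : IsSplitting Z Y L n) {f : α → β} (hf : InjOn f Z) :
    IsSplitting (f '' Z) (fun m => f '' Y m) L n := by
  obtain ⟨hdisj, rfl, hsel⟩ := h
  refine ⟨fun m m' hm hm' hne => ?_, image_iUnion₂ f _, fun W hW hmeet => ?_⟩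
  · exact (hdisj m m' hm hm' hne).image hf (subset_biUnion_of_mem (u := Y) hm)
      (subset_biUnion_of_mem (u := Y) hm')
  · obtain ⟨k, hk, hYk⟩ := hsel (f ⁻¹' W ∩ ⋃ m ∈ Iio L, Y m) inter_subset_right
      fun m hm => by
      obtain ⟨_, hyW, p, hp, rfl⟩ := hmeet m hm
      exact ⟨p, ⟨hyW, mem_biUnion (show m ∈ Iio L from hm) hp⟩, hp⟩
    exact ⟨k, hk, image_subset_iff.2 fun p hp => (hYk hp).1⟩

theorem congr {Y' : ℕ → Set α} (h : IsSplitting Z Y L n) (hLn : L ≤ n)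
    (hY : ∀ m < n, Y m = Y' m) : IsSplitting Z Y' L n := by
  obtain ⟨hdisj, rfl, hsel⟩ := h
  have hY' : ∀ m < L, Y m = Y' m := fun m hm => hY m (hm.trans_le hLn)
  refine ⟨fun m m' hm hm' => ?_, iUnion₂_congr fun m hm => hY' m hm, fun W hW hmeet => ?_⟩
  · rw [← hY' m hm, ← hY' m' hm']
    exact hdisj m m' hm hm'
  · obtain ⟨k, hk, hYk⟩ := hsel W hW fun m hm => hY' m hm ▸ hmeet m hm
    exact ⟨k, hk, hY k hk ▸ hYk⟩

end IsSplitting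

theorem isSplitting_empty {α : Type*} {L : ℕ} (hL : 0 < L) (n : ℕ) :
    IsSplitting (∅ : Set α) (fun _ => ∅) L n :=
  ⟨fun _ _ _ _ _ => disjoint_bot_left, by simp, fun _ _ hmeet => by
    simpa using hmeet 0 hL⟩

/-- For `k < L`, the shift onto the `k`-th block `[kS, kS + S)`; for `L ≤ k`, the transversal
sending `p` into block `p` at the offset given by the `p`-th base-`S` digit of `k - L`. -/
def blockEmbed (S L k p : ℕ) : ℕ :=
  if k < L then k * S + p else p * S + (k - L) / S ^ p % S

section blockEmbed

variable {S L k p : ℕ}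

theorem blockEmbed_of_lt (hk : k < L) : blockEmbed S L k p = k * S + p := if_pos hk

theorem blockEmbed_of_le (hk : L ≤ k) :
    blockEmbed S L k p = p * S + (k - L) / S ^ p % S := if_neg hk.not_gt

theorem mul_add_div_of_lt {q r : ℕ} (hr : r < S) : (q * S + r) / S = q := by
  rw [add_comm, Nat.add_mul_div_right _ _ (by omega), Nat.div_eq_of_lt hr, zero_add]

theorem injOn_blockEmbed : InjOn (blockEmbed S L k) (Iio S) := by
  intro p hp q hq h
  rcases lt_or_ge k L with hk | hk
  · simpa [blockEmbed_of_lt hk] using h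
  · rw [blockEmbed_of_le hk, blockEmbed_of_le hk] at h
    have hS : 0 < S := (Nat.zero_le p).trans_lt hp
    simpa [mul_add_div_of_lt (Nat.mod_lt _ hS)] using congrArg (· / S) h

theorem blockEmbed_lt (hSL : S ≤ L) (hp : p < S) : blockEmbed S L k p < L * S := by
  rcases lt_or_ge k L with hk | hk
  · rw [blockEmbed_of_lt hk]
    nlinarith
  · rw [blockEmbed_of_le hk]
    have := Nat.mod_lt ((k - L) / S ^ p) ((Nat.zero_le p).trans_lt hp)
    nlinarith

theorem iUnion_image_blockEmbed {n : ℕ} (hSL : S ≤ L) (hLn : L ≤ n) :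
    ⋃ k ∈ Iio n, blockEmbed S L k '' Iio S = Iio (L * S) := by
  refine subset_antisymm (iUnion₂_subset fun k _ => ?_) fun y hy => ?_
  · rintro _ ⟨p, hp, rfl⟩
    exact blockEmbed_lt hSL hp
  · have hS : 0 < S := Nat.pos_of_ne_zero fun h => by simp [h] at hy
    have hyL : y / S < L := Nat.div_lt_of_lt_mul (by rw [mul_comm]; exact hy)
    refine mem_biUnion (lt_of_lt_of_le hyL hLn) ⟨y % S, Nat.mod_lt _ hS, ?_⟩
    rw [blockEmbed_of_lt hyL, mul_comm, Nat.div_add_mod]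

theorem image_blockEmbed_of_lt (hk : k < L) :
    blockEmbed S L k '' Iio S = (k * S + ·) '' Iio S :=
  image_congr fun _ _ => blockEmbed_of_lt hk

theorem isSplitting_blockEmbed {n : ℕ} (hSL : S ≤ L) (hn : L + S ^ S ≤ n) :
    IsSplitting (Iio (L * S)) (fun m => blockEmbed S L m '' Iio S) L n := by
  refine ⟨fun m m' hm hm' hne => ?_, (iUnion_image_blockEmbed hSL le_rfl).symm,
    fun W hW hmeet => ?_⟩
  · dsimp only
    rw [image_blockEmbed_of_lt hm, image_blockEmbed_of_lt hm']
    refine disjoint_image_image fun p hp q hq h => hne ?_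
    simpa [mul_add_div_of_lt hp, mul_add_div_of_lt hq] using congrArg (· / S) h
  · have hrow : ∀ p : Fin S, ∃ r : Fin S, p * S + r ∈ W := fun p => by
      have hp : (p : ℕ) < L := p.isLt.trans_le hSL
      obtain ⟨_, hyW, r, hr, rfl⟩ := hmeet p hp
      exact ⟨⟨r, hr⟩, by rwa [blockEmbed_of_lt hp] at hyW⟩
    choose v hv using hrow
    refine ⟨L + finFunctionFinEquiv v, by omega, ?_⟩
    rintro _ ⟨p, hp, rfl⟩
    have hdigit : (finFunctionFinEquiv v : ℕ) / S ^ p % S = v ⟨p, hp⟩ := by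
      have := congrArg (fun w => (w ⟨p, hp⟩ : ℕ)) (finFunctionFinEquiv.symm_apply_apply v)
      simpa only [finFunctionFinEquiv_symm_apply_val] using this
    rw [blockEmbed_of_le (Nat.le_add_right _ _), Nat.add_sub_cancel_left, hdigit]
    exact hv ⟨p, hp⟩

end blockEmbed

/-- `Yset ℓ` is `Yset' (ℓ + 1)`; the extra generality allows structures with no coordinates. -/
def Yset' (L : ℕ) (a : (Fin L → ℕ) → Finset ℕ) (i : ℕ) (ρ : Fin L → ℕ) : Set ℕ :=
  ⋃ x ∈ {x : Fin L → ℕ | (∀ j, x j < nseq (j : ℕ)) ∧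
    ∀ j : Fin L, i ≤ (j : ℕ) → x j = ρ j}, ((a x : Finset ℕ) : Set ℕ)

section Yset'

variable {L : ℕ} {a : (Fin L → ℕ) → Finset ℕ} {i i' : ℕ} {ρ ρ' : Fin L → ℕ}

theorem mem_Yset' {y : ℕ} :
    y ∈ Yset' L a i ρ ↔ ∃ x : Fin L → ℕ, (∀ j, x j < nseq (j : ℕ)) ∧
      (∀ j : Fin L, i ≤ (j : ℕ) → x j = ρ j) ∧ y ∈ a x := by
  simp [Yset', and_assoc]

theorem coe_subset_Yset' {x : Fin L → ℕ} (hx : ∀ j, x j < nseq (j : ℕ)) (hi : L ≤ i) :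
    (a x : Set ℕ) ⊆ Yset' L a i ρ := fun _ hy =>
  mem_Yset'.2 ⟨x, hx, fun j hj => absurd (hi.trans hj) (not_le.2 j.isLt), hy⟩

theorem Yset'_subset_of_le (hi' : L ≤ i') : Yset' L a i ρ ⊆ Yset' L a i' ρ' := fun _ hy => by
  obtain ⟨x, hx, -, hy⟩ := mem_Yset'.1 hy
  exact coe_subset_Yset' hx hi' hy

end Yset'

def groundSize : ℕ → ℕ
  | 0 => 2
  | L + 1 => Lseq L * groundSize L

theorem Lseq_pos (j : ℕ) : 0 < Lseq j := by
  induction j with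
  | zero => decide
  | succ j ih => exact Nat.mul_pos ih (Nat.add_pos_left ih _)

theorem groundSize_le_Lseq (L : ℕ) : groundSize L ≤ Lseq L := by
  induction L with
  | zero => rfl
  | succ L ih => exact Nat.mul_le_mul_left _ (ih.trans (Nat.le_add_right _ _))

theorem Lseq_add_groundSize_pow_le_nseq (L : ℕ) :
    Lseq L + groundSize L ^ groundSize L ≤ nseq L :=
  Nat.add_le_add_left (Nat.pow_self_mono (groundSize_le_Lseq L)) _

def extendFamily (L : ℕ) (a : (Fin L → ℕ) → Finset ℕ) :
    (Fin (L + 1) → ℕ) → Finset ℕ :=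
  fun x => (a (Fin.init x)).image (blockEmbed (groundSize L) (Lseq L) (x (Fin.last L)))

section extendFamily

variable {L : ℕ} {a : (Fin L → ℕ) → Finset ℕ} {i : ℕ} {ρ : Fin (L + 1) → ℕ}

theorem mem_Yset'_extendFamily {y : ℕ} :
    y ∈ Yset' (L + 1) (extendFamily L a) i ρ ↔
      ∃ c < nseq L, (i ≤ L → c = ρ (Fin.last L)) ∧
      y ∈ blockEmbed (groundSize L) (Lseq L) c '' Yset' L a i (Fin.init ρ) := by
  rw [mem_Yset']
  constructor
  · rintro ⟨x, hx, hxρ, hy⟩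
    obtain ⟨p, hp, rfl⟩ := Finset.mem_image.1 hy
    refine ⟨x (Fin.last L), hx _, fun hi => hxρ _ (by simpa using hi), p,
      mem_Yset'.2 ⟨Fin.init x, fun j => hx _, fun j hj => hxρ _ hj, hp⟩, rfl⟩
  · rintro ⟨c, hc, hcρ, p, hp, rfl⟩
    obtain ⟨x, hx, hxρ, hp⟩ := mem_Yset'.1 hp
    refine ⟨Fin.snoc x c, Fin.forall_fin_succ'.2 ⟨fun j => ?_, ?_⟩,
      Fin.forall_fin_succ'.2 ⟨fun j hj => ?_, fun hi => ?_⟩, ?_⟩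
    · simpa using hx j
    · simpa using hc
    · simpa [Fin.init] using hxρ j (by simpa using hj)
    · simpa using hcρ (by simpa using hi)
    · simpa [extendFamily] using ⟨p, hp, rfl⟩

theorem Yset'_extendFamily_of_lt (hi : i ≤ L) (hc : ρ (Fin.last L) < nseq L) :
    Yset' (L + 1) (extendFamily L a) i ρ =
      blockEmbed (groundSize L) (Lseq L) (ρ (Fin.last L)) '' Yset' L a i (Fin.init ρ) := by
  ext y
  rw [mem_Yset'_extendFamily]
  constructor
  · rintro ⟨c, -, hcρ, hy⟩
    rwa [← hcρ hi]
  · exact fun hy => ⟨_, hc, fun _ => rfl, hy⟩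

theorem Yset'_extendFamily_of_le (hi : i ≤ L) (hc : nseq L ≤ ρ (Fin.last L)) :
    Yset' (L + 1) (extendFamily L a) i ρ = ∅ :=
  eq_empty_of_forall_notMem fun _ hy => by
    obtain ⟨c, hcn, hcρ, -⟩ := mem_Yset'_extendFamily.1 hy
    exact (hcρ hi ▸ hcn).not_ge hc

theorem Yset'_extendFamily_top :
    Yset' (L + 1) (extendFamily L a) (L + 1) ρ =
      ⋃ c ∈ Iio (nseq L),
        blockEmbed (groundSize L) (Lseq L) c '' Yset' L a (L + 1) (Fin.init ρ) := by
  ext y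
  simp only [mem_Yset'_extendFamily, mem_iUnion, mem_Iio, exists_prop]
  exact ⟨fun ⟨c, hc, _, hy⟩ => ⟨c, hc, hy⟩,
    fun ⟨c, hc, hy⟩ => ⟨c, hc, fun h => by omega, hy⟩⟩

end extendFamily

structure IsStructure (L : ℕ) (a : (Fin L → ℕ) → Finset ℕ) : Prop where
  card_eq_two : ∀ x : Fin L → ℕ, (∀ j, x j < nseq (j : ℕ)) → (a x).card = 2
  isSplitting : ∀ i : Fin L, ∀ ρ : Fin L → ℕ, IsSplitting (Yset' L a ((i : ℕ) + 1) ρ)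
    (fun m => Yset' L a (i : ℕ) (Function.update ρ i m)) (Lseq (i : ℕ)) (nseq (i : ℕ))
  ground_eq : ∀ ρ : Fin L → ℕ, Yset' L a L ρ = Iio (groundSize L)

theorem isStructure_zero : IsStructure 0 fun _ => {0, 1} := by
  refine ⟨fun _ _ => rfl, fun i => i.elim0, fun ρ => ?_⟩
  ext y
  simp [mem_Yset', groundSize]
  omega

namespace IsStructure

variable {L : ℕ} {a : (Fin L → ℕ) → Finset ℕ}

theorem Yset'_subset_ground (h : IsStructure L a) (i : ℕ) (ρ : Fin L → ℕ) :
    Yset' L a i ρ ⊆ Iio (groundSize L) :=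
  h.ground_eq ρ ▸ Yset'_subset_of_le le_rfl

theorem Yset'_of_le (h : IsStructure L a) {i : ℕ} (hi : L ≤ i) (ρ : Fin L → ℕ) :
    Yset' L a i ρ = Iio (groundSize L) :=
  h.ground_eq ρ ▸ (Yset'_subset_of_le le_rfl).antisymm (Yset'_subset_of_le hi)

theorem ground_extendFamily (h : IsStructure L a) (ρ : Fin (L + 1) → ℕ) :
    Yset' (L + 1) (extendFamily L a) (L + 1) ρ = Iio (groundSize (L + 1)) := by
  rw [Yset'_extendFamily_top, h.Yset'_of_le (Nat.le_succ L)]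
  exact iUnion_image_blockEmbed (groundSize_le_Lseq L) (Nat.le_add_right _ _)

theorem card_extendFamily (h : IsStructure L a) {x : Fin (L + 1) → ℕ}
    (hx : ∀ j, x j < nseq (j : ℕ)) : (extendFamily L a x).card = 2 := by
  have hx' : ∀ j : Fin L, Fin.init x j < nseq (j : ℕ) := fun j => hx j.castSucc
  rw [_root_.extendFamily, Finset.card_image_of_injOn, h.card_eq_two _ hx']
  exact injOn_blockEmbed.mono
    ((coe_subset_Yset' hx' le_rfl).trans (h.Yset'_subset_ground L (Fin.init x)))

theorem isSplitting_extendFamily_last (h : IsStructure L a) (ρ : Fin (L + 1) → ℕ) :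
    IsSplitting (Yset' (L + 1) (extendFamily L a) ((Fin.last L : ℕ) + 1) ρ)
      (fun m => Yset' (L + 1) (extendFamily L a) (Fin.last L : ℕ)
        (Function.update ρ (Fin.last L) m))
      (Lseq (Fin.last L : ℕ)) (nseq (Fin.last L : ℕ)) := by
  simp only [Fin.val_last]
  rw [h.ground_extendFamily]
  refine (isSplitting_blockEmbed (groundSize_le_Lseq L) (Lseq_add_groundSize_pow_le_nseq L)).congr
    (Nat.le_add_right _ _) fun m hm => ?_
  rw [Yset'_extendFamily_of_lt le_rfl (by simpa using hm), Fin.init_update_last,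
    h.Yset'_of_le le_rfl, Function.update_self]

theorem isSplitting_extendFamily_castSucc (h : IsStructure L a) (i : Fin L)
    (ρ : Fin (L + 1) → ℕ) :
    IsSplitting (Yset' (L + 1) (extendFamily L a) ((i.castSucc : ℕ) + 1) ρ)
      (fun m => Yset' (L + 1) (extendFamily L a) (i.castSucc : ℕ)
        (Function.update ρ i.castSucc m))
      (Lseq (i.castSucc : ℕ)) (nseq (i.castSucc : ℕ)) := by
  simp only [Fin.val_castSucc]
  have hlast : ∀ m, Function.update ρ i.castSucc m (Fin.last L) = ρ (Fin.last L) :=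
    fun m => Function.update_of_ne (Fin.castSucc_lt_last i).ne' m ρ
  rcases lt_or_ge (ρ (Fin.last L)) (nseq L) with hc | hc
  · have hsplit := (h.isSplitting i (Fin.init ρ)).image
      (injOn_blockEmbed (L := Lseq L) (k := ρ (Fin.last L)) |>.mono (h.Yset'_subset_ground _ _))
    rw [Yset'_extendFamily_of_lt i.isLt hc]
    convert hsplit using 2 with m
    rw [Yset'_extendFamily_of_lt i.isLt.le ((hlast m).symm ▸ hc), hlast, Fin.init_update_castSucc]
  · rw [Yset'_extendFamily_of_le i.isLt hc]
    convert isSplitting_empty (Lseq_pos i) _ using 2 with m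
    exact Yset'_extendFamily_of_le i.isLt.le ((hlast m).symm ▸ hc)

theorem extendFamily (h : IsStructure L a) : IsStructure (L + 1) (extendFamily L a) :=
  ⟨fun _ => h.card_extendFamily,
    Fin.lastCases h.isSplitting_extendFamily_last h.isSplitting_extendFamily_castSucc,
    h.ground_extendFamily⟩

end IsStructure

theorem exists_isStructure (L : ℕ) : ∃ a, IsStructure L a := by
  induction L with
  | zero => exact ⟨_, isStructure_zero⟩
  | succ L ih =>
    obtain ⟨a, h⟩ := ih
    exact ⟨_, h.extendFamily⟩

/-- For every `ℓ` there is an `ℓ`-structure: a family `{a x : x ∈ 𝒩_ℓ}` of two-element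
subsets of ℕ such that, with `Y_ρ` as in `Yset`, for every `i ≤ ℓ` and every partial
index `ρ` (on `{i+1,…,ℓ}`): (a) the sets `Y_{ρ⌢m}` for `m < L i` are pairwise disjoint;
(b) `Y_ρ` equals the union of the `Y_{ρ⌢m}` for `m < L i` (so every `Y_{ρ⌢k}` with
`k < n i` is contained in this union); (c) every `Y ⊆ Y_ρ` meeting all `Y_{ρ⌢m}` with
`m < L i` contains `Y_{ρ⌢k}` for some `k < n i`.  Moreover `Y_∅` is an initial segment
of ℕ of cardinality at most `L (ℓ+1)`. -/
theorem exists_ell_structure (ℓ : ℕ) :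
    ∃ a : (Fin (ℓ + 1) → ℕ) → Finset ℕ,
      (∀ x : Fin (ℓ + 1) → ℕ, (∀ j, x j < nseq (j : ℕ)) → (a x).card = 2) ∧
      (∀ i : Fin (ℓ + 1), ∀ ρ : Fin (ℓ + 1) → ℕ,
        (∀ m m' : ℕ, m < Lseq (i : ℕ) → m' < Lseq (i : ℕ) → m ≠ m' →
          Disjoint (Yset ℓ a (i : ℕ) (Function.update ρ i m))
            (Yset ℓ a (i : ℕ) (Function.update ρ i m'))) ∧
        (Yset ℓ a ((i : ℕ) + 1) ρ =
          ⋃ m ∈ Set.Iio (Lseq (i : ℕ)), Yset ℓ a (i : ℕ) (Function.update ρ i m)) ∧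
        (∀ Y : Set ℕ, Y ⊆ Yset ℓ a ((i : ℕ) + 1) ρ →
          (∀ m < Lseq (i : ℕ),
            (Y ∩ Yset ℓ a (i : ℕ) (Function.update ρ i m)).Nonempty) →
          ∃ k < nseq (i : ℕ), Yset ℓ a (i : ℕ) (Function.update ρ i k) ⊆ Y)) ∧
      (∃ N ≤ Lseq (ℓ + 1), Yset ℓ a (ℓ + 1) (fun _ => 0) = Set.Iio N) := by
  obtain ⟨a, h⟩ := exists_isStructure (ℓ + 1)
  exact ⟨a, h.card_eq_two, h.isSplitting,
    groundSize (ℓ + 1), groundSize_le_Lseq _, h.ground_eq _⟩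
end
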